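/- \sum_{k=0}^\infty binom(2k,k) / 16^k * (H_{2k}^{(2)} - (1/4) H_k^{(2)}) = \pi^2 / (36 sqrt(3)). -/

import Mathlib

/-!
Put `c k = (2k choose k) / 4 ^ k` and `h k = ∑_{i<k} 1 / (2i+1)^2`; then
`H_{2k}^{(2)} - H_k^{(2)} / 4 = h k` and the series is `∑ c k * h k / 4 ^ k`.
For `B t = ∑ b k * t ^ k`, the derivative of `√(1 - t) * B t` is
`∑ ((k+1) b (k+1) - (k+1/2) b k) t ^ k / √(1 - t)`. Since `(k+1) c (k+1) = (k+1/2) c k`, this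
vanishes for `b = c`, so `∑ c k t ^ k = 1 / √(1 - t)` and, integrating,
`∑ c k x ^ (2k+1) / (2k+1) = arcsin x`. For `b = 2 c h` it becomes `2 arcsin x / √(1 - x²)` at
`t = x²`, whence `√(1 - x²) ∑ 2 c k h k x ^ (2k) = arcsin² x` on `(-1, 1)`; take `x = 1/2`.
-/

open Real Set

noncomputable def powSeries (b : ℕ → ℝ) (t : ℝ) : ℝ := ∑' k, b k * t ^ k

def derivCoeff (b : ℕ → ℝ) (k : ℕ) : ℝ := (k + 1) * b (k + 1)

def PolyGrowth (b : ℕ → ℝ) : Prop := ∃ C : ℝ, ∃ p : ℕ, ∀ k, |b k| ≤ C * ((k : ℝ) + 1) ^ p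

lemma tsum_succ_eq_tsum_of_eq_zero {f : ℕ → ℝ} (hf : f 0 = 0) :
    ∑' k, f (k + 1) = ∑' k, f k :=
  tsum_pnat_eq_tsum_succ.symm.trans (tsum_pnat_eq_tsum_of_eq_zero hf)

lemma summable_succ_pow_mul_geometric (p : ℕ) {s : ℝ} (hs : |s| < 1) :
    Summable fun k : ℕ => ((k : ℝ) + 1) ^ p * s ^ k := by
  have hs' : ‖s‖ < 1 := by rwa [Real.norm_eq_abs]
  refine (summable_sum fun i (_ : i ∈ Finset.range (p + 1)) =>
    (summable_pow_mul_geometric_of_norm_lt_one i hs').mul_left (p.choose i : ℝ)).congr fun k => ?_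
  simp only [add_pow, one_pow, mul_one, Finset.sum_mul]
  exact Finset.sum_congr rfl fun i _ => by ring

lemma natCast_mul_pow_pred_mul_le {y r : ℝ} (hy : |y| ≤ r) (k : ℕ) :
    k * |y| ^ (k - 1) * r ≤ (k + 1) * r ^ k := by
  have hr := (abs_nonneg y).trans hy
  rcases k with _ | k
  · simp
  · calc ((k + 1 : ℕ) : ℝ) * |y| ^ k * r ≤ ((k + 1 : ℕ) : ℝ) * r ^ k * r := by gcongr
      _ ≤ _ := by
        push_cast
        rw [mul_assoc, ← pow_succ]
        gcongr
        linarith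

lemma nonneg_of_forall_abs_le_mul_pow {b : ℕ → ℝ} {C : ℝ} {p : ℕ}
    (hb : ∀ k, |b k| ≤ C * ((k : ℝ) + 1) ^ p) : 0 ≤ C := by
  simpa using (abs_nonneg _).trans (hb 0)

namespace PolyGrowth

variable {b : ℕ → ℝ}

lemma of_abs_le {C : ℝ} (hb : ∀ k, |b k| ≤ C) : PolyGrowth b :=
  ⟨C, 0, fun k => by simpa using hb k⟩

lemma natCast_mul (hb : PolyGrowth b) : PolyGrowth fun k => k * b k := by
  obtain ⟨C, p, hb⟩ := hb
  refine ⟨C, p + 1, fun k => ?_⟩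
  rw [abs_mul, Nat.abs_cast, pow_succ]
  calc (k : ℝ) * |b k| ≤ ((k : ℝ) + 1) * (C * ((k : ℝ) + 1) ^ p) := by
        gcongr
        · linarith
        · exact hb k
    _ = _ := by ring

lemma derivCoeff (hb : PolyGrowth b) : PolyGrowth (_root_.derivCoeff b) := by
  obtain ⟨C, p, hb⟩ := hb.natCast_mul
  refine ⟨2 ^ p * C, p, fun k => ?_⟩
  have hC := nonneg_of_forall_abs_le_mul_pow hb
  have hk : (k : ℝ) + 1 + 1 ≤ 2 * ((k : ℝ) + 1) := by linarith
  calc |_root_.derivCoeff b k| ≤ C * ((k : ℝ) + 1 + 1) ^ p := by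
        simpa [_root_.derivCoeff] using hb (k + 1)
    _ ≤ C * (2 * ((k : ℝ) + 1)) ^ p := by gcongr
    _ = 2 ^ p * C * ((k : ℝ) + 1) ^ p := by rw [mul_pow]; ring

lemma summable_mul_pow (hb : PolyGrowth b) {t : ℝ} (ht : |t| < 1) :
    Summable fun k => b k * t ^ k := by
  obtain ⟨C, p, hb⟩ := hb
  refine Summable.of_norm_bounded
    ((summable_succ_pow_mul_geometric p (by rwa [abs_abs])).mul_left C) fun k => ?_
  rw [Real.norm_eq_abs, abs_mul, abs_pow, ← mul_assoc]
  exact mul_le_mul_of_nonneg_right (hb k) (by positivity)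

lemma hasDerivAt_powSeries (hb : PolyGrowth b) {t : ℝ} (ht : |t| < 1) :
    HasDerivAt (powSeries b) (powSeries (_root_.derivCoeff b) t) t := by
  obtain ⟨C, p, hbound⟩ := hb
  have hC := nonneg_of_forall_abs_le_mul_pow hbound
  obtain ⟨r, htr, hr1⟩ := exists_between ht
  have hr0 : 0 < r := (abs_nonneg t).trans_lt htr
  replace hr1 : |r| < 1 := by rwa [abs_of_pos hr0]
  replace htr : t ∈ Ioo (-r) r := abs_lt.mp htr
  have hterm : ∀ k (y : ℝ), y ∈ Ioo (-r) r →
      ‖b k * (k * y ^ (k - 1))‖ ≤ C * (((k : ℝ) + 1) ^ (p + 1) * r ^ k) / r := by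
    intro k y hy
    rw [le_div_iff₀ hr0, Real.norm_eq_abs, abs_mul, abs_mul, abs_pow, Nat.abs_cast]
    calc |b k| * (k * |y| ^ (k - 1)) * r = |b k| * (k * |y| ^ (k - 1) * r) := by ring
      _ ≤ C * ((k : ℝ) + 1) ^ p * (((k : ℝ) + 1) * r ^ k) :=
        mul_le_mul (hbound k) (natCast_mul_pow_pred_mul_le (abs_lt.mpr hy).le k) (by positivity)
          (by positivity)
      _ = C * (((k : ℝ) + 1) ^ (p + 1) * r ^ k) := by ring
  have hu : Summable fun k : ℕ => C * (((k : ℝ) + 1) ^ (p + 1) * r ^ k) / r :=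
    ((summable_succ_pow_mul_geometric (p + 1) hr1).mul_left C).div_const r
  have hderiv : HasDerivAt (powSeries b) (∑' k, b k * (k * t ^ (k - 1))) t :=
    hasDerivAt_tsum_of_isPreconnected hu isOpen_Ioo (convex_Ioo (-r) r).isPreconnected
      (fun k y _ => (hasDerivAt_pow k y).const_mul (b k)) hterm
      (y₀ := 0) (by simp [hr0]) (summable_mul_pow ⟨C, p, hbound⟩ (by simp)) htr
  refine hderiv.congr_deriv ?_
  rw [← tsum_succ_eq_tsum_of_eq_zero (by simp)]
  refine tsum_congr fun k => ?_
  simp only [_root_.derivCoeff, Nat.cast_add, Nat.cast_one, Nat.add_sub_cancel]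
  ring

end PolyGrowth

lemma mul_powSeries_derivCoeff (b : ℕ → ℝ) (t : ℝ) :
    t * powSeries (derivCoeff b) t = powSeries (fun k => k * b k) t := by
  rw [powSeries, powSeries, ← tsum_mul_left,
    ← tsum_succ_eq_tsum_of_eq_zero (f := fun k : ℕ => (k : ℝ) * b k * t ^ k) (by simp)]
  refine tsum_congr fun k => ?_
  simp only [derivCoeff, Nat.cast_add, Nat.cast_one]
  ring

section PowerSeriesCalculus

variable {b : ℕ → ℝ} {t : ℝ}

lemma one_sub_mul_powSeries_derivCoeff_sub_half (hb : PolyGrowth b) (ht : |t| < 1) :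
    (1 - t) * powSeries (derivCoeff b) t - powSeries b t / 2 =
      powSeries (fun k => derivCoeff b k - (k + 1 / 2) * b k) t := by
  rw [sub_mul, one_mul, mul_powSeries_derivCoeff]
  simp only [powSeries]
  rw [← tsum_div_const, ← Summable.tsum_sub (hb.derivCoeff.summable_mul_pow ht)
    (hb.natCast_mul.summable_mul_pow ht), ← Summable.tsum_sub
    ((hb.derivCoeff.summable_mul_pow ht).sub (hb.natCast_mul.summable_mul_pow ht))
    ((hb.summable_mul_pow ht).div_const 2)]
  exact tsum_congr fun k => by ring

lemma hasDerivAt_sqrt_one_sub_mul_powSeries (hb : PolyGrowth b) (ht : |t| < 1) :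
    HasDerivAt (fun s => √(1 - s) * powSeries b s)
      (powSeries (fun k => derivCoeff b k - (k + 1 / 2) * b k) t / √(1 - t)) t := by
  have hpos : 0 < 1 - t := by linarith [le_abs_self t]
  have hsqrt : HasDerivAt (fun s => √(1 - s)) (-1 / (2 * √(1 - t))) t := by
    simpa using ((hasDerivAt_id t).const_sub 1).sqrt hpos.ne'
  refine (hsqrt.mul (hb.hasDerivAt_powSeries ht)).congr_deriv ?_
  rw [← one_sub_mul_powSeries_derivCoeff_sub_half hb ht]
  have hsq : √(1 - t) * √(1 - t) = 1 - t := Real.mul_self_sqrt hpos.le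
  have hne : √(1 - t) ≠ 0 := (Real.sqrt_pos.mpr hpos).ne'
  field_simp
  linear_combination 2 * powSeries (derivCoeff b) t * hsq

lemma hasDerivAt_mul_powSeries_sq (hb : PolyGrowth b) {x : ℝ} (hx : |x| < 1) :
    HasDerivAt (fun y => y * powSeries b (y ^ 2)) (powSeries (fun k => (2 * k + 1) * b k) (x ^ 2))
      x := by
  have hx2 : |x ^ 2| < 1 := by rw [abs_pow]; nlinarith [abs_nonneg x]
  have hsq : HasDerivAt (fun y : ℝ => y ^ 2) (2 * x) x := by simpa using hasDerivAt_pow 2 x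
  have hcomp := (hb.hasDerivAt_powSeries hx2).comp (h := fun y => y ^ 2) x hsq
  refine ((hasDerivAt_id x).mul hcomp).congr_deriv ?_
  calc 1 * powSeries b (x ^ 2) + x * (powSeries (derivCoeff b) (x ^ 2) * (2 * x))
      = powSeries b (x ^ 2) + 2 * (x ^ 2 * powSeries (derivCoeff b) (x ^ 2)) := by ring
    _ = _ := by
      rw [mul_powSeries_derivCoeff]
      simp only [powSeries]
      rw [← tsum_mul_left, ← Summable.tsum_add (hb.summable_mul_pow hx2)
        ((hb.natCast_mul.summable_mul_pow hx2).mul_left 2)]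
      exact tsum_congr fun k => by ring

end PowerSeriesCalculus

lemma IsOpen.eqOn_of_hasDerivAt {s : Set ℝ} {f g f' : ℝ → ℝ} {x₀ : ℝ} (hs : IsOpen s)
    (hs' : IsPreconnected s) (hf : ∀ x ∈ s, HasDerivAt f (f' x) x)
    (hg : ∀ x ∈ s, HasDerivAt g (f' x) x) (hx₀ : x₀ ∈ s) (h : f x₀ = g x₀) : EqOn f g s :=
  hs.eqOn_of_deriv_eq hs' (fun x hx => (hf x hx).differentiableAt.differentiableWithinAt)
    (fun x hx => (hg x hx).differentiableAt.differentiableWithinAt)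
    (fun x hx => (hf x hx).deriv.trans (hg x hx).deriv.symm) hx₀ h

noncomputable def invSqrtCoeff (k : ℕ) : ℝ := k.centralBinom / 4 ^ k

noncomputable def arcsinCoeff (k : ℕ) : ℝ := invSqrtCoeff k / (2 * k + 1)

noncomputable def oddInvSqSum (k : ℕ) : ℝ := ∑ i ∈ Finset.range k, 1 / (2 * (i : ℝ) + 1) ^ 2

noncomputable def arcsinSqDivSqrtCoeff (k : ℕ) : ℝ := 2 * invSqrtCoeff k * oddInvSqSum k

lemma invSqrtCoeff_nonneg (k : ℕ) : 0 ≤ invSqrtCoeff k := by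
  unfold invSqrtCoeff; positivity

lemma invSqrtCoeff_le_one (k : ℕ) : invSqrtCoeff k ≤ 1 := by
  rw [invSqrtCoeff, div_le_one (by positivity)]
  exact_mod_cast Nat.centralBinom_le_four_pow k

lemma derivCoeff_invSqrtCoeff (k : ℕ) :
    derivCoeff invSqrtCoeff k = (k + 1 / 2) * invSqrtCoeff k := by
  have h : ((k : ℝ) + 1) * (k + 1).centralBinom = 2 * (2 * k + 1) * k.centralBinom := by
    exact_mod_cast Nat.succ_mul_centralBinom_succ k
  simp only [derivCoeff, invSqrtCoeff, pow_succ]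
  field_simp
  linear_combination 2 * h

lemma oddInvSqSum_succ (k : ℕ) :
    oddInvSqSum (k + 1) = oddInvSqSum k + 1 / (2 * (k : ℝ) + 1) ^ 2 :=
  Finset.sum_range_succ _ _

lemma oddInvSqSum_nonneg (k : ℕ) : 0 ≤ oddInvSqSum k := by
  unfold oddInvSqSum; positivity

lemma oddInvSqSum_le (k : ℕ) : oddInvSqSum k ≤ k := by
  calc oddInvSqSum k ≤ ∑ _i ∈ Finset.range k, (1 : ℝ) :=
        Finset.sum_le_sum fun i _ => by
          rw [div_le_one (by positivity)]
          exact one_le_pow₀ (by linarith [(i.cast_nonneg : (0 : ℝ) ≤ i)])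
    _ = k := by simp

lemma derivCoeff_arcsinSqDivSqrtCoeff (k : ℕ) :
    derivCoeff arcsinSqDivSqrtCoeff k - (k + 1 / 2) * arcsinSqDivSqrtCoeff k = arcsinCoeff k := by
  have h := derivCoeff_invSqrtCoeff k
  simp only [derivCoeff] at h
  have hk : (2 * (k : ℝ) + 1) ≠ 0 := by positivity
  simp only [derivCoeff, arcsinSqDivSqrtCoeff, arcsinCoeff, oddInvSqSum_succ]
  calc _ = 2 * (((k : ℝ) + 1) * invSqrtCoeff (k + 1)) * (oddInvSqSum k + 1 / (2 * k + 1) ^ 2)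
        - (k + 1 / 2) * (2 * invSqrtCoeff k * oddInvSqSum k) := by ring
    _ = _ := by
      rw [h]
      field_simp
      ring

lemma polyGrowth_invSqrtCoeff : PolyGrowth invSqrtCoeff :=
  .of_abs_le fun k => (abs_of_nonneg (invSqrtCoeff_nonneg k)).trans_le (invSqrtCoeff_le_one k)

lemma polyGrowth_arcsinCoeff : PolyGrowth arcsinCoeff := by
  refine .of_abs_le (C := 1) fun k => ?_
  have := invSqrtCoeff_nonneg k
  rw [arcsinCoeff, abs_of_nonneg (by positivity), div_le_one (by positivity)]
  linarith [invSqrtCoeff_le_one k, (k.cast_nonneg : (0 : ℝ) ≤ k)]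

lemma polyGrowth_arcsinSqDivSqrtCoeff : PolyGrowth arcsinSqDivSqrtCoeff := by
  refine ⟨2, 1, fun k => ?_⟩
  have := invSqrtCoeff_nonneg k
  have := oddInvSqSum_nonneg k
  rw [arcsinSqDivSqrtCoeff, abs_of_nonneg (by positivity), pow_one]
  nlinarith [invSqrtCoeff_le_one k, oddInvSqSum_le k]

lemma powSeries_zero (b : ℕ → ℝ) : powSeries b 0 = b 0 := by
  rw [powSeries, tsum_eq_single 0 fun k hk => by simp [hk]]
  simp

lemma sqrt_one_sub_mul_powSeries_invSqrtCoeff :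
    EqOn (fun t => √(1 - t) * powSeries invSqrtCoeff t) 1 (Ioo (-1) 1) := by
  refine isOpen_Ioo.eqOn_of_hasDerivAt (convex_Ioo _ _).isPreconnected (f' := 0) (x₀ := 0)
    (fun t ht => ?_) (fun t _ => hasDerivAt_const t 1) (by norm_num)
    (by simp [powSeries_zero, invSqrtCoeff])
  simpa [derivCoeff_invSqrtCoeff, powSeries] using
    hasDerivAt_sqrt_one_sub_mul_powSeries polyGrowth_invSqrtCoeff (abs_lt.mpr ht)

lemma powSeries_invSqrtCoeff {t : ℝ} (ht : t ∈ Ioo (-1) 1) :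
    powSeries invSqrtCoeff t = (√(1 - t))⁻¹ :=
  eq_inv_of_mul_eq_one_right (sqrt_one_sub_mul_powSeries_invSqrtCoeff ht)

lemma sq_mem_Ioo_neg_one_one {x : ℝ} (hx : x ∈ Ioo (-1) 1) : x ^ 2 ∈ Ioo (-1) 1 := by
  rw [mem_Ioo, ← abs_lt, abs_pow, ← one_pow 2]
  exact pow_lt_pow_left₀ (abs_lt.mpr hx) (abs_nonneg x) two_ne_zero

lemma mul_powSeries_arcsinCoeff_sq :
    EqOn (fun x => x * powSeries arcsinCoeff (x ^ 2)) arcsin (Ioo (-1) 1) := by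
  have hcoeff : (fun k : ℕ => (2 * k + 1) * arcsinCoeff k) = invSqrtCoeff := by
    funext k
    rw [arcsinCoeff, mul_div_cancel₀ _ (by positivity)]
  refine isOpen_Ioo.eqOn_of_hasDerivAt (convex_Ioo _ _).isPreconnected
    (f' := fun x => 1 / √(1 - x ^ 2)) (x₀ := 0) (fun x hx => ?_)
    (fun x hx => hasDerivAt_arcsin hx.1.ne' hx.2.ne) (by norm_num) (by simp)
  have h := hasDerivAt_mul_powSeries_sq polyGrowth_arcsinCoeff (abs_lt.mpr hx)
  rwa [hcoeff, powSeries_invSqrtCoeff (sq_mem_Ioo_neg_one_one hx), ← one_div] at h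

lemma sqrt_one_sub_sq_mul_powSeries_arcsinSqDivSqrtCoeff :
    EqOn (fun x => √(1 - x ^ 2) * powSeries arcsinSqDivSqrtCoeff (x ^ 2)) (fun x => arcsin x ^ 2)
      (Ioo (-1) 1) := by
  refine isOpen_Ioo.eqOn_of_hasDerivAt (convex_Ioo _ _).isPreconnected
    (f' := fun x => 2 * arcsin x / √(1 - x ^ 2)) (x₀ := 0) (fun x hx => ?_)
    (fun x hx => ?_) (by norm_num) (by simp [powSeries_zero, arcsinSqDivSqrtCoeff, oddInvSqSum])
  · have hsq : HasDerivAt (fun y : ℝ => y ^ 2) (2 * x) x := by simpa using hasDerivAt_pow 2 x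
    have h := (hasDerivAt_sqrt_one_sub_mul_powSeries polyGrowth_arcsinSqDivSqrtCoeff
      (abs_lt.mpr (sq_mem_Ioo_neg_one_one hx))).comp (h := fun y => y ^ 2) x hsq
    simp only [derivCoeff_arcsinSqDivSqrtCoeff] at h
    refine h.congr_deriv ?_
    rw [← mul_powSeries_arcsinCoeff_sq hx]
    ring
  · simpa [div_eq_mul_inv] using (hasDerivAt_arcsin hx.1.ne' hx.2.ne).fun_pow 2

lemma sum_Icc_inv_sq_two_mul_sub_quarter (k : ℕ) :
    ∑ j ∈ Finset.Icc 1 (2 * k), (1 : ℝ) / (j : ℝ) ^ 2 -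
      1 / 4 * ∑ j ∈ Finset.Icc 1 k, (1 : ℝ) / (j : ℝ) ^ 2 = oddInvSqSum k := by
  induction k with
  | zero => simp [oddInvSqSum]
  | succ k ih =>
    rw [show 2 * (k + 1) = 2 * k + 1 + 1 by ring, Finset.sum_Icc_succ_top (by omega),
      Finset.sum_Icc_succ_top (by omega), Finset.sum_Icc_succ_top (by omega), oddInvSqSum_succ,
      ← ih]
    have : (k : ℝ) + 1 ≠ 0 := by positivity
    have : 2 * (k : ℝ) + 1 ≠ 0 := by positivity
    push_cast
    field_simp
    ring

lemma choose_div_sixteen_pow_mul_oddInvSqSum (k : ℕ) :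
    ((2 * k).choose k : ℝ) / 16 ^ k * oddInvSqSum k =
      arcsinSqDivSqrtCoeff k * ((1 / 2) ^ 2) ^ k / 2 := by
  rw [arcsinSqDivSqrtCoeff, invSqrtCoeff, Nat.centralBinom_eq_two_mul_choose,
    show (16 : ℝ) ^ k = 4 ^ k * 4 ^ k by rw [← mul_pow]; norm_num,
    show ((1 / 2 : ℝ) ^ 2) ^ k = 1 / 4 ^ k by norm_num [div_pow]]
  field_simp

theorem sum_central_binom_harmonic2_16pow :
    ∑' k : ℕ,
        (Nat.choose (2 * k) k : ℝ) / 16 ^ k *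
          ((∑ j ∈ Finset.Icc 1 (2 * k), (1 : ℝ) / (j : ℝ) ^ 2) -
            (1 / 4) * ∑ j ∈ Finset.Icc 1 k, (1 : ℝ) / (j : ℝ) ^ 2) =
      Real.pi ^ 2 / (36 * Real.sqrt 3) := by
  have harcsin : arcsin (1 / 2) = π / 6 :=
    arcsin_eq_of_sin_eq sin_pi_div_six ⟨by linarith [pi_pos], by linarith [pi_pos]⟩
  have hsqrt : √(1 - (1 / 2 : ℝ) ^ 2) = √3 / 2 := by
    rw [← cos_arcsin, harcsin, cos_pi_div_six]
  have key := sqrt_one_sub_sq_mul_powSeries_arcsinSqDivSqrtCoeff (x := 1 / 2) (by norm_num)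
  simp only [hsqrt, harcsin] at key
  simp_rw [sum_Icc_inv_sq_two_mul_sub_quarter, choose_div_sixteen_pow_mul_oddInvSqSum]
  rw [tsum_div_const, ← powSeries, eq_div_iff (by positivity)]
  linear_combination 36 * key
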